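/- In the setting of the previous statement, if additionally H₀ carries an orthogonal complex structure J with J² = -Id and SJ = -JS, and L is a Lagrangian subspace of H₀ (JL = L^⊥), then the limit L_∞ = lim_{r→∞} e^{-rS} L is again a Lagrangian subspace of H₀. -/

import Mathlib

/-!
Since `S` anticommutes with `J`, `J e^{-rS} = e^{rS} J`, and `e^{rS}` is the inverse of the
self-adjoint map `e^{-rS}`; hence `J (e^{-rS} L) = e^{rS} Lᗮ = (e^{-rS} L)ᗮ`, i.e. every
`e^{-rS} L` is Lagrangian. For orthogonal `J` the projections onto `J K` and `Kᗮ` are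
`J P_K J⁻¹` and `1 - P_K`, so being Lagrangian is the closed condition `J P_K J⁻¹ = 1 - P_K`
on `P_K`, which survives the limit.
-/

open scoped RealInnerProductSpace

variable {H0 : Type*} [NormedAddCommGroup H0] [InnerProductSpace ℝ H0]
  [FiniteDimensional ℝ H0]

/-- The orthogonal projection onto a subspace, as an endomorphism of `H0`. -/
noncomputable def projCLM (K : Submodule ℝ H0) : H0 →L[ℝ] H0 :=
  K.subtypeL.comp K.orthogonalProjectionOnto

open Filter Topology NormedSpace

theorem LinearMap.IsSymmetric.orthogonal_map {𝕜 E : Type*} [RCLike 𝕜] [NormedAddCommGroup E]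
    [InnerProductSpace 𝕜 E] {T : E →ₗ[𝕜] E} (hT : T.IsSymmetric) (K : Submodule 𝕜 E) :
    (K.map T)ᗮ = Kᗮ.comap T := by
  ext y
  simp only [Submodule.mem_orthogonal, Submodule.mem_map, Submodule.mem_comap,
    forall_exists_index, and_imp, forall_apply_eq_imp_iff₂, fun x ↦ hT x y]

namespace Submodule

section RCLike

variable {𝕜 E : Type*} [RCLike 𝕜] [NormedAddCommGroup E] [InnerProductSpace 𝕜 E]

def IsLagrangian (J : E →ₗ[𝕜] E) (K : Submodule 𝕜 E) : Prop :=
  K.map J = Kᗮ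

theorem IsLagrangian.map_of_isSymmetric {J : E →ₗ[𝕜] E} {K : Submodule 𝕜 E}
    (hK : K.IsLagrangian J) (T : E ≃ₗ[𝕜] E) (hT : (T : E →ₗ[𝕜] E).IsSymmetric)
    (hJT : J ∘ₗ T = T.symm ∘ₗ J) :
    (K.map (T : E →ₗ[𝕜] E)).IsLagrangian J := by
  unfold IsLagrangian at *
  rw [hT.orthogonal_map, comap_equiv_eq_map_symm, ← hK, ← map_comp, ← map_comp, hJT]

theorem starProjection_map_linearIsometryEquiv (J : E ≃ₗᵢ[𝕜] E) (K : Submodule 𝕜 E)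
    [K.HasOrthogonalProjection] :
    (K.map (J.toLinearEquiv : E →ₗ[𝕜] E)).starProjection =
      (J : E →L[𝕜] E) ∘L K.starProjection ∘L (J.symm : E →L[𝕜] E) := by
  ext x
  exact starProjection_map_apply J K x

theorem isLagrangian_iff_starProjection (J : E ≃ₗᵢ[𝕜] E) (K : Submodule 𝕜 E)
    [K.HasOrthogonalProjection] :
    K.IsLagrangian (J.toLinearEquiv : E →ₗ[𝕜] E) ↔
      (J : E →L[𝕜] E) ∘L K.starProjection ∘L (J.symm : E →L[𝕜] E) = 1 - K.starProjection := by
  rw [IsLagrangian, ← starProjection_inj, starProjection_map_linearIsometryEquiv,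
    starProjection_orthogonal']

theorem IsLagrangian.of_tendsto_starProjection {ι : Type*} {l : Filter ι} [l.NeBot]
    (J : E ≃ₗᵢ[𝕜] E) {K : ι → Submodule 𝕜 E} [∀ i, (K i).HasOrthogonalProjection]
    (hK : ∀ i, (K i).IsLagrangian (J.toLinearEquiv : E →ₗ[𝕜] E))
    {K' : Submodule 𝕜 E} [K'.HasOrthogonalProjection]
    (hlim : Tendsto (fun i ↦ (K i).starProjection) l (𝓝 K'.starProjection)) :
    K'.IsLagrangian (J.toLinearEquiv : E →ₗ[𝕜] E) := by
  have hconj : Continuous fun P : E →L[𝕜] E ↦ (J : E →L[𝕜] E) ∘L P ∘L (J.symm : E →L[𝕜] E) :=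
    (continuous_const_mul _).comp (continuous_mul_const _)
  rw [isLagrangian_iff_starProjection]
  refine tendsto_nhds_unique ((hconj.tendsto _).comp hlim) ?_
  simp_rw [Function.comp_def, fun i ↦ (isLagrangian_iff_starProjection J (K i)).mp (hK i)]
  exact tendsto_const_nhds.sub hlim

end RCLike

theorem IsLagrangian.map_exp {E : Type*} [NormedAddCommGroup E] [InnerProductSpace ℝ E]
    [CompleteSpace E] {J : E →L[ℝ] E} {K : Submodule ℝ E} (hK : K.IsLagrangian (J : E →ₗ[ℝ] E))
    {A : E →L[ℝ] E} (hA : IsSelfAdjoint A) (hJA : SemiconjBy J A (-A)) :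
    (K.map ((exp A : E →L[ℝ] E) : E →ₗ[ℝ] E)).IsLagrangian (J : E →ₗ[ℝ] E) := by
  -- the identities for `exp` in Mathlib are stated in normed `ℚ`-algebras
  let := NormedAlgebra.restrictScalars ℚ ℝ (E →L[ℝ] E)
  have hright : exp A * exp (-A) = 1 := by
    rw [← exp_add_of_commute (Commute.refl A).neg_right, add_neg_cancel, exp_zero]
  have hleft : exp (-A) * exp A = 1 := by
    rw [← exp_add_of_commute (Commute.refl A).neg_left, neg_add_cancel, exp_zero]
  let T := ContinuousLinearEquiv.equivOfInverse (exp A) (exp (-A))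
    (DFunLike.congr_fun hleft) (DFunLike.congr_fun hright)
  exact hK.map_of_isSymmetric T.toLinearEquiv hA.exp.isSymmetric
    (congrArg ((↑) : (E →L[ℝ] E) → E →ₗ[ℝ] E) hJA.exp_right)

end Submodule

def LinearIsometryEquiv.ofSqEqNeg {𝕜 E : Type*} [RCLike 𝕜] [NormedAddCommGroup E]
    [InnerProductSpace 𝕜 E] (J : E →L[𝕜] E) (hJ2 : ∀ x, J (J x) = -x)
    (hJ : ∀ x y, inner 𝕜 (J x) (J y) = inner 𝕜 x y) : E ≃ₗᵢ[𝕜] E :=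
  LinearEquiv.isometryOfInner
    (ContinuousLinearEquiv.equivOfInverse J (-J) (fun x ↦ by simp [hJ2]) (fun x ↦ by simp [hJ2]))
    hJ

open Submodule in
/-- If the finite-dimensional inner product space `H0` carries an orthogonal complex
structure `J` with `J² = -Id` and `SJ = -JS`, and `L` is a Lagrangian subspace, then the
adiabatic limit `L_∞ = lim_{r→∞} e^{-rS} L` (limit in the Grassmannian, i.e. of orthogonal
projections) is again Lagrangian. -/
theorem adiabatic_limit_lagrangian
    (S : H0 →L[ℝ] H0) (hS : IsSelfAdjoint S)
    (J : H0 →L[ℝ] H0) (hJ2 : ∀ x, J (J x) = -x)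
    (hJorth : ∀ x y : H0, ⟪J x, J y⟫ = ⟪x, y⟫)
    (hSJ : ∀ x, S (J x) = -J (S x))
    (L : Submodule ℝ H0) (hLag : Submodule.map (J : H0 →ₗ[ℝ] H0) L = Lᗮ)
    (Linf : Submodule ℝ H0)
    (hlim : Filter.Tendsto
      (fun r : ℝ => projCLM (Submodule.map ((NormedSpace.exp (-(r • S)) : H0 →L[ℝ] H0) : H0 →ₗ[ℝ] H0) L))
      Filter.atTop (nhds (projCLM Linf))) :
    Submodule.map (J : H0 →ₗ[ℝ] H0) Linf = Linfᗮ := by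
  have hLr (r : ℝ) :
      (L.map ((exp (-(r • S)) : H0 →L[ℝ] H0) : H0 →ₗ[ℝ] H0)).IsLagrangian (J : H0 →ₗ[ℝ] H0) :=
    IsLagrangian.map_exp hLag ((IsSelfAdjoint.all r).smul hS).neg (by ext x; simp [hSJ])
  -- `projCLM K` is `K.starProjection` by definition
  exact IsLagrangian.of_tendsto_starProjection (.ofSqEqNeg J hJ2 hJorth) hLr hlim
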